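/- Let 𝔽 be a field and F = F_d + F_{d−γ₁} + ⋯ + F_{d−γ_m} ∈ 𝔽[X₁,…,Xₙ], where F_d and each F_{d−γ_i} are nonzero homogeneous polynomials of degrees d = deg F and d−γ_i respectively, with 0 < γ₁ < ⋯ < γ_m ≤ d, and these are all the nonzero homogeneous components of F. Let k ∈ {1, …, m} be such that γ_k ∉ span_ℕ{γ₁, …, γ_{k−1}} and F_d and F_{d−γ_k} have no common nonconstant factor, and assume F_d is squarefree. Then for every nonconstant polynomial P dividing F, the homogeneous component of P in degree deg P − γ_k is nonzero. -/

import Mathlib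

/-!
Write `P⟨a⟩` (`lowerComponent P a`) for the homogeneous component of `P` in degree
`deg P - a`. Over a domain these multiply like the coefficients of power series:
`(P * Q)⟨a⟩ = ∑_{b + c = a} P⟨b⟩ * Q⟨c⟩`. For `F = P * Q` this gives `F_d = P⟨0⟩ * Q⟨0⟩`,
so the leading forms `P⟨0⟩` and `Q⟨0⟩` are coprime because `F_d` is squarefree.

Let `M = span_ℕ {γ_j | j < k}`. By strong induction, `P⟨a⟩ = Q⟨a⟩ = 0` for every
`a < γ_k` with `a ∉ M`: if `b, c > 0` and `b + c = a`, then `b ∉ M` or `c ∉ M`, so all cross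
terms vanish and `0 = F⟨a⟩ = P⟨a⟩ * Q⟨0⟩ + P⟨0⟩ * Q⟨a⟩`. Coprimality then gives
`P⟨0⟩ ∣ P⟨a⟩`, which forces `P⟨a⟩ = 0` because `P⟨a⟩` has lower degree.
The same computation at `a = γ_k ∉ M` gives
`F_{d-γ_k} = P⟨γ_k⟩ * Q⟨0⟩ + P⟨0⟩ * Q⟨γ_k⟩`. So if `P⟨γ_k⟩ = 0`, the nonconstant form
`P⟨0⟩` divides both `F_d` and `F_{d-γ_k}`.
-/

/-- The homogeneous component of a multivariate polynomial in an integer degree `j`: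
it is the usual homogeneous component for `j ≥ 0`, and `0` for negative `j`. -/
noncomputable def homComponentZ {n : ℕ} {𝔽 : Type*} [Field 𝔽]
    (P : MvPolynomial (Fin n) 𝔽) (j : ℤ) : MvPolynomial (Fin n) 𝔽 :=
  if 0 ≤ j then MvPolynomial.homogeneousComponent j.toNat P else 0

open MvPolynomial

namespace MvPolynomial

open Finset

variable {σ R : Type*}

section CommSemiring
variable [CommSemiring R]

attribute [local instance] gradedAlgebra in
theorem homogeneousComponent_mul (P Q : MvPolynomial σ R) (n : ℕ) :
    homogeneousComponent n (P * Q) =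
      ∑ ij ∈ antidiagonal n, homogeneousComponent ij.1 P * homogeneousComponent ij.2 Q := by
  have := DirectSum.coe_mul_apply_eq_sum_antidiagonal (homogeneousSubmodule σ R)
    (DirectSum.decompose (homogeneousSubmodule σ R) P)
    (DirectSum.decompose (homogeneousSubmodule σ R) Q) n
  rw [← DirectSum.decompose_mul] at this
  simpa only [DirectSum.decompose, Equiv.coe_fn_mk, decomposition.decompose'_apply] using this

theorem homogeneousComponent_totalDegree_ne_zero {P : MvPolynomial σ R} (hP : P ≠ 0) :
    homogeneousComponent P.totalDegree P ≠ 0 := by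
  obtain ⟨s, hs, hdeg⟩ := exists_mem_eq_sup P.support (support_nonempty.mpr hP) Finsupp.degree
  rw [← support_nonempty, support_homogeneousComponent]
  exact ⟨s, mem_filter.mpr ⟨hs, hdeg.symm⟩⟩

noncomputable def lowerComponent (P : MvPolynomial σ R) (a : ℕ) : MvPolynomial σ R :=
  if a ≤ P.totalDegree then homogeneousComponent (P.totalDegree - a) P else 0

theorem lowerComponent_of_le {P : MvPolynomial σ R} {a : ℕ} (h : a ≤ P.totalDegree) :
    lowerComponent P a = homogeneousComponent (P.totalDegree - a) P :=
  if_pos h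

theorem lowerComponent_of_totalDegree_lt {P : MvPolynomial σ R} {a : ℕ} (h : P.totalDegree < a) :
    lowerComponent P a = 0 :=
  if_neg h.not_ge

theorem le_totalDegree_of_lowerComponent_ne_zero {P : MvPolynomial σ R} {a : ℕ}
    (h : lowerComponent P a ≠ 0) : a ≤ P.totalDegree :=
  le_of_not_gt fun ha => h (lowerComponent_of_totalDegree_lt ha)

theorem isHomogeneous_lowerComponent (P : MvPolynomial σ R) (a : ℕ) :
    (lowerComponent P a).IsHomogeneous (P.totalDegree - a) := by
  unfold lowerComponent
  split_ifs
  · exact homogeneousComponent_isHomogeneous _ P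
  · exact isHomogeneous_zero _ _ _

theorem totalDegree_lowerComponent_zero (P : MvPolynomial σ R) :
    (lowerComponent P 0).totalDegree = P.totalDegree := by
  rcases eq_or_ne P 0 with rfl | hP
  · simp [lowerComponent]
  · rw [lowerComponent_of_le (Nat.zero_le _)]
    exact (homogeneousComponent_isHomogeneous _ P).totalDegree
      (homogeneousComponent_totalDegree_ne_zero hP)

theorem lowerComponent_add_sum {ι : Type*} [Fintype ι]
    {F Fd : MvPolynomial σ R} {G : ι → MvPolynomial σ R} {d : ℕ} {γ : ι → ℕ}
    (hF : F = Fd + ∑ i, G i) (hdeg : F.totalDegree = d) (hFd : Fd.IsHomogeneous d)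
    (hG : ∀ i, (G i).IsHomogeneous (d - γ i)) (hγ : ∀ i, γ i ≤ d) (a : ℕ) :
    lowerComponent F a = (if a = 0 then Fd else 0) + ∑ i with γ i = a, G i := by
  rw [sum_filter]
  rcases le_or_gt a d with ha | ha
  · rw [lowerComponent_of_le (hdeg ▸ ha), hdeg, hF, map_add, map_sum,
      homogeneousComponent_of_mem hFd]
    congr 1
    · exact if_congr (by omega) rfl rfl
    · refine sum_congr rfl fun i _ => ?_
      rw [homogeneousComponent_of_mem (hG i)]
      exact if_congr (by have := hγ i; omega) rfl rfl
  · rw [lowerComponent_of_totalDegree_lt (hdeg ▸ ha), if_neg (by omega), zero_add]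
    exact (sum_eq_zero fun i _ => if_neg ((hγ i).trans_lt ha).ne).symm

end CommSemiring

section NoZeroDivisors
variable [CommSemiring R] [NoZeroDivisors R]

theorem lowerComponent_mul (P Q : MvPolynomial σ R) (a : ℕ) :
    lowerComponent (P * Q) a =
      ∑ bc ∈ antidiagonal a, lowerComponent P bc.1 * lowerComponent Q bc.2 := by
  rcases eq_or_ne P 0 with rfl | hP
  · simp [lowerComponent]
  rcases eq_or_ne Q 0 with rfl | hQ
  · simp [lowerComponent]
  have hdeg := totalDegree_mul_of_isDomain hP hQ
  have hsupp : ∀ bc : ℕ × ℕ, lowerComponent P bc.1 * lowerComponent Q bc.2 ≠ 0 →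
      bc.1 ≤ P.totalDegree ∧ bc.2 ≤ Q.totalDegree := fun bc hne =>
    ⟨le_totalDegree_of_lowerComponent_ne_zero (left_ne_zero_of_mul hne),
      le_totalDegree_of_lowerComponent_ne_zero (right_ne_zero_of_mul hne)⟩
  rcases lt_or_ge (P * Q).totalDegree a with ha | ha
  · refine (lowerComponent_of_totalDegree_lt ha).trans (sum_eq_zero fun bc hbc => ?_).symm
    by_contra hne
    have := hsupp bc hne
    rw [HasAntidiagonal.mem_antidiagonal] at hbc
    omega
  rw [lowerComponent_of_le ha, homogeneousComponent_mul, hdeg]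
  symm
  refine sum_bij_ne_zero (fun bc _ _ => (P.totalDegree - bc.1, Q.totalDegree - bc.2))
    (fun bc hbc hne => ?_) (fun bc _ hne bc' _ hne' h => ?_) (fun ij hij hne => ?_)
    (fun bc _ hne => ?_)
  · have := hsupp bc hne
    rw [HasAntidiagonal.mem_antidiagonal] at hbc ⊢
    omega
  · have := hsupp bc hne
    have := hsupp bc' hne'
    simp only [Prod.mk.injEq] at h
    exact Prod.ext (by omega) (by omega)
  · have hi : ij.1 ≤ P.totalDegree := le_of_not_gt fun h =>
      hne (by rw [homogeneousComponent_eq_zero _ _ h, zero_mul])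
    have hj : ij.2 ≤ Q.totalDegree := le_of_not_gt fun h =>
      hne (by rw [homogeneousComponent_eq_zero _ _ h, mul_zero])
    rw [HasAntidiagonal.mem_antidiagonal] at hij
    refine ⟨(P.totalDegree - ij.1, Q.totalDegree - ij.2),
      HasAntidiagonal.mem_antidiagonal.mpr (by omega), ?_, Prod.ext (by omega) (by omega)⟩
    rwa [lowerComponent_of_le (Nat.sub_le _ _), lowerComponent_of_le (Nat.sub_le _ _),
      Nat.sub_sub_self hi, Nat.sub_sub_self hj]
  · rw [lowerComponent_of_le (hsupp bc hne).1, lowerComponent_of_le (hsupp bc hne).2]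

theorem lowerComponent_mul_of_notMem {M : AddSubmonoid ℕ} {P Q : MvPolynomial σ R} {a : ℕ}
    (haM : a ∉ M) (hP : ∀ b < a, b ∉ M → lowerComponent P b = 0)
    (hQ : ∀ c < a, c ∉ M → lowerComponent Q c = 0) :
    lowerComponent (P * Q) a =
      lowerComponent P a * lowerComponent Q 0 + lowerComponent P 0 * lowerComponent Q a := by
  have ha : a ≠ 0 := fun h => haM (h ▸ M.zero_mem)
  rw [lowerComponent_mul]
  refine sum_eq_add_of_mem (a, 0) (0, a) (by simp) (by simp) (by simp [ha])
    fun bc hbc hne => ?_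
  rw [HasAntidiagonal.mem_antidiagonal] at hbc
  have hb : bc.1 ≠ 0 := fun h => hne.2 (Prod.ext h (by omega))
  have hc : bc.2 ≠ 0 := fun h => hne.1 (Prod.ext (by omega) h)
  by_cases hbM : bc.1 ∈ M
  · have hcM : bc.2 ∉ M := fun hcM => haM (hbc ▸ M.add_mem hbM hcM)
    rw [hQ _ (by omega) hcM, mul_zero]
  · rw [hP _ (by omega) hbM, zero_mul]

end NoZeroDivisors

section IsDomain
variable [CommRing R] [IsDomain R] [UniqueFactorizationMonoid R]

theorem lowerComponent_eq_zero_of_isRelPrime {P Q : MvPolynomial σ R} {a : ℕ} (ha : 0 < a)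
    (hrel : IsRelPrime (lowerComponent P 0) (lowerComponent Q 0))
    (h : lowerComponent P a * lowerComponent Q 0 + lowerComponent P 0 * lowerComponent Q a = 0) :
    lowerComponent P a = 0 := by
  by_contra hne
  have hdvd : lowerComponent P 0 ∣ lowerComponent P a :=
    hrel.dvd_of_dvd_mul_right ⟨-lowerComponent Q a, by linear_combination h⟩
  have hle := totalDegree_le_of_dvd_of_isDomain hdvd hne
  rw [totalDegree_lowerComponent_zero] at hle
  have := (isHomogeneous_lowerComponent P a).totalDegree_le
  have := le_totalDegree_of_lowerComponent_ne_zero hne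
  omega

theorem lowerComponent_eq_zero_of_notMem {M : AddSubmonoid ℕ} {P Q : MvPolynomial σ R} {N : ℕ}
    (hrel : IsRelPrime (lowerComponent P 0) (lowerComponent Q 0))
    (hPQ : ∀ a < N, a ∉ M → lowerComponent (P * Q) a = 0) :
    ∀ a < N, a ∉ M → lowerComponent P a = 0 ∧ lowerComponent Q a = 0 := by
  intro a
  induction a using Nat.strong_induction_on with
  | _ a ih =>
  intro haN haM
  have ha : 0 < a := Nat.pos_of_ne_zero fun h => haM (h ▸ M.zero_mem)
  have hsplit := lowerComponent_mul_of_notMem haM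
    (fun b hb hbM => (ih b hb (hb.trans haN) hbM).1)
    (fun c hc hcM => (ih c hc (hc.trans haN) hcM).2)
  rw [hPQ a haN haM] at hsplit
  exact ⟨lowerComponent_eq_zero_of_isRelPrime ha hrel hsplit.symm,
    lowerComponent_eq_zero_of_isRelPrime ha hrel.symm (by linear_combination -hsplit)⟩

end IsDomain

end MvPolynomial

theorem homComponentZ_totalDegree_sub {n : ℕ} {𝔽 : Type*} [Field 𝔽]
    (P : MvPolynomial (Fin n) 𝔽) (a : ℕ) :
    homComponentZ P ((P.totalDegree : ℤ) - a) = lowerComponent P a := by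
  unfold homComponentZ lowerComponent
  by_cases h : a ≤ P.totalDegree
  · rw [if_pos (by omega), if_pos h]
    congr
    omega
  · rw [if_neg (by omega), if_neg h]

theorem component_at_gap_ne_zero_general {n m : ℕ} {𝔽 : Type*} [Field 𝔽]
    (F Fd : MvPolynomial (Fin n) 𝔽) (G : Fin (m + 1) → MvPolynomial (Fin n) 𝔽)
    (d : ℕ) (γ : Fin (m + 1) → ℕ)
    (hF : F = Fd + ∑ i, G i)
    (hdeg : F.totalDegree = d)
    (hFd : Fd.IsHomogeneous d)
    (hG : ∀ i, (G i).IsHomogeneous (d - γ i))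
    (hpos : 0 < γ 0) (hmono : StrictMono γ) (hle : γ (Fin.last m) ≤ d)
    (k : Fin (m + 1))
    (hspan : γ k ∉ AddSubmonoid.closure (γ '' {j | j < k}))
    (hrp : ∀ D : MvPolynomial (Fin n) 𝔽, D ∣ Fd → D ∣ G k → IsUnit D)
    (hsf : Squarefree Fd) :
    ∀ P : MvPolynomial (Fin n) 𝔽, P.totalDegree ≠ 0 → P ∣ F →
      homComponentZ P ((P.totalDegree : ℤ) - γ k) ≠ 0 := by
  rintro P hP ⟨Q, rfl⟩
  have hγ_pos : ∀ i, 0 < γ i := fun i => hpos.trans_le (hmono.monotone (Fin.zero_le i))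
  have hγ_le : ∀ i, γ i ≤ d := fun i => (hmono.monotone (Fin.le_last i)).trans hle
  have hcomp := lowerComponent_add_sum hF hdeg hFd hG hγ_le
  have hFd_eq : Fd = lowerComponent P 0 * lowerComponent Q 0 := by
    simpa [(hγ_pos _).ne', lowerComponent_mul] using (hcomp 0).symm
  have hgap : ∀ a < γ k, a ∉ AddSubmonoid.closure (γ '' {j | j < k}) →
      lowerComponent (P * Q) a = 0 := by
    intro a ha haM
    rw [hcomp, if_neg fun (h : a = 0) => haM (h ▸ zero_mem _), zero_add]
    refine Finset.sum_eq_zero fun i hi => ?_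
    rw [Finset.mem_filter] at hi
    rcases lt_or_ge i k with hik | hik
    · exact (haM (hi.2 ▸ AddSubmonoid.subset_closure ⟨i, hik, rfl⟩)).elim
    · exact ((hmono.monotone hik).not_gt (hi.2 ▸ ha)).elim
  have hvanish := lowerComponent_eq_zero_of_notMem (.of_squarefree_mul (hFd_eq ▸ hsf)) hgap
  have hGk : G k = lowerComponent P (γ k) * lowerComponent Q 0 +
      lowerComponent P 0 * lowerComponent Q (γ k) := by
    rw [← lowerComponent_mul_of_notMem hspan (fun b hb hbM => (hvanish b hb hbM).1)
      (fun c hc hcM => (hvanish c hc hcM).2), hcomp, if_neg (hγ_pos k).ne']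
    simp [hmono.injective.eq_iff, Finset.filter_eq']
  rw [homComponentZ_totalDegree_sub]
  intro hPk
  have hunit := hrp _ (hFd_eq ▸ dvd_mul_right _ _)
    (by rw [hGk, hPk, zero_mul, zero_add]; exact dvd_mul_right _ _)
  exact hP (totalDegree_lowerComponent_zero P ▸ (isUnit_iff_totalDegree_of_isReduced.mp hunit).2)

/-- If `γ_k ∉ span_ℕ{γ₁, …, γ_{k−1}}`, the forms `F_d` and `F_{d−γ_k}` have no common
nonconstant factor, and `F_d` is squarefree, then every nonconstant divisor `P` of `F`
has a nonzero homogeneous component in degree `deg P − γ_k`. -/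
theorem component_at_gap_ne_zero {n m : ℕ} {𝔽 : Type*} [Field 𝔽]
    (F Fd : MvPolynomial (Fin n) 𝔽) (G : Fin (m + 1) → MvPolynomial (Fin n) 𝔽)
    (d : ℕ) (γ : Fin (m + 1) → ℕ)
    (hF : F = Fd + ∑ i, G i)
    (hdeg : F.totalDegree = d)
    (hFd : Fd.IsHomogeneous d) (hFd0 : Fd ≠ 0)
    (hG : ∀ i, (G i).IsHomogeneous (d - γ i)) (hG0 : ∀ i, G i ≠ 0)
    (hpos : 0 < γ 0) (hmono : StrictMono γ) (hle : γ (Fin.last m) ≤ d)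
    (k : Fin (m + 1))
    (hspan : γ k ∉ AddSubmonoid.closure (γ '' {j | j < k}))
    (hrp : ∀ D : MvPolynomial (Fin n) 𝔽, D ∣ Fd → D ∣ G k → IsUnit D)
    (hsf : Squarefree Fd) :
    ∀ P : MvPolynomial (Fin n) 𝔽, P.totalDegree ≠ 0 → P ∣ F →
      homComponentZ P ((P.totalDegree : ℤ) - γ k) ≠ 0 :=
  component_at_gap_ne_zero_general F Fd G d γ hF hdeg hFd hG hpos hmono hle k hspan hrp hsf
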